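/- arXiv:2504.00269 — 2 statements merged into one kernel-verified Lean document; each statement's English description precedes it below -/
import Mathlib

section
/- The function g₁(x) = cosh(x) − (cosh x)⁻¹ − x·arctan(sinh x) is strictly increasing on [0, ∞). -/
open Real Set

/-!
The derivative of `g₁` is `h x = sinh x + sinh x / cosh² x - arctan (sinh x) - x / cosh x`, which
vanishes at `0`. Differentiating once more gives
`h' x = sinh x / cosh³ x * (sinh³ x - sinh x + x cosh x)`, and `x cosh x > sinh x` for `x > 0`
(the difference has derivative `x sinh x`), so `h' > 0` on `(0, ∞)`. Hence `h > 0` there and `g₁` is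
strictly increasing on `[0, ∞)`.
-/

theorem strictMonoOn_Ici_of_hasDerivAt_pos {f f' : ℝ → ℝ} {a : ℝ}
    (hf : ∀ x, HasDerivAt f (f' x) x) (hf' : ∀ x, a < x → 0 < f' x) :
    StrictMonoOn f (Ici a) :=
  strictMonoOn_of_hasDerivWithinAt_pos (convex_Ici a)
    (fun x _ => (hf x).continuousAt.continuousWithinAt)
    (fun x _ => (hf x).hasDerivWithinAt)
    (fun x hx => hf' x (by simpa using hx))

theorem pos_of_hasDerivAt_pos {f f' : ℝ → ℝ} {a x : ℝ}
    (hf : ∀ x, HasDerivAt f (f' x) x) (hf' : ∀ x, a < x → 0 < f' x) (ha : f a = 0)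
    (hx : a < x) : 0 < f x :=
  ha ▸ strictMonoOn_Ici_of_hasDerivAt_pos hf hf' self_mem_Ici hx.le hx

theorem Real.sinh_lt_mul_cosh {x : ℝ} (hx : 0 < x) : sinh x < x * cosh x := by
  have hd (y : ℝ) : HasDerivAt (fun y => y * cosh y - sinh y) (y * sinh y) y :=
    (((hasDerivAt_id' y).mul (hasDerivAt_cosh y)).sub (hasDerivAt_sinh y)).congr_deriv (by ring)
  have := pos_of_hasDerivAt_pos hd (fun y hy => mul_pos hy (sinh_pos_iff.2 hy)) (by simp) hx
  linarith

theorem Real.hasDerivAt_arctan_sinh (x : ℝ) :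
    HasDerivAt (fun x => arctan (sinh x)) (cosh x)⁻¹ x :=
  (hasDerivAt_sinh x).arctan.congr_deriv <| by
    rw [← cosh_sq']
    field_simp [(cosh_pos x).ne']

theorem hasDerivAt_cosh_sub_inv_cosh_sub_mul_arctan_sinh (x : ℝ) :
    HasDerivAt (fun x => cosh x - (cosh x)⁻¹ - x * arctan (sinh x))
      (sinh x + sinh x / cosh x ^ 2 - arctan (sinh x) - x / cosh x) x :=
  (((hasDerivAt_cosh x).sub ((hasDerivAt_cosh x).inv (cosh_pos x).ne')).sub
    ((hasDerivAt_id' x).mul (hasDerivAt_arctan_sinh x))).congr_deriv (by ring)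

theorem hasDerivAt_sinh_add_div_cosh_sq_sub_arctan_sinh_sub_div_cosh (x : ℝ) :
    HasDerivAt (fun x => sinh x + sinh x / cosh x ^ 2 - arctan (sinh x) - x / cosh x)
      (sinh x / cosh x ^ 3 * (sinh x ^ 3 - sinh x + x * cosh x)) x := by
  have hc := (cosh_pos x).ne'
  refine ((((hasDerivAt_sinh x).add ((hasDerivAt_sinh x).div ((hasDerivAt_cosh x).pow 2)
    (pow_ne_zero 2 hc))).sub (hasDerivAt_arctan_sinh x)).sub
    ((hasDerivAt_id' x).div (hasDerivAt_cosh x) hc)).congr_deriv ?_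
  simp only [Pi.pow_apply]
  field_simp
  linear_combination cosh x * (cosh x ^ 2 + sinh x ^ 2) * cosh_sq' x

theorem arctan_sinh_add_div_cosh_lt {x : ℝ} (hx : 0 < x) :
    arctan (sinh x) + x / cosh x < sinh x + sinh x / cosh x ^ 2 := by
  have hderiv_pos (y : ℝ) (hy : 0 < y) :
      0 < sinh y / cosh y ^ 3 * (sinh y ^ 3 - sinh y + y * cosh y) := by
    have hsinh := sinh_pos_iff.2 hy
    have hcubic : 0 < sinh y ^ 3 - sinh y + y * cosh y := by
      linarith [pow_pos hsinh 3, sinh_lt_mul_cosh hy]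
    have := cosh_pos y
    positivity
  have := pos_of_hasDerivAt_pos hasDerivAt_sinh_add_div_cosh_sq_sub_arctan_sinh_sub_div_cosh
    hderiv_pos (by simp) hx
  linarith

theorem stmt_3 :
    StrictMonoOn (fun x : ℝ => Real.cosh x - (Real.cosh x)⁻¹ - x * Real.arctan (Real.sinh x))
      (Set.Ici (0 : ℝ)) := by
  refine strictMonoOn_Ici_of_hasDerivAt_pos hasDerivAt_cosh_sub_inv_cosh_sub_mul_arctan_sinh
    fun x hx => ?_
  linarith [arctan_sinh_add_div_cosh_lt hx]
end

section
/- For every real t > 1, (t + 1/t − t^(1/3))·√(t² − 1) − arccosh(t) > 0. -/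
open Real

noncomputable def arccosh (t : ℝ) : ℝ := Real.log (t + Real.sqrt (t ^ 2 - 1))

/-!
Write `gap x` for the left-hand side, with Mathlib's `Real.arcosh` in place of `arccosh` (the two
are the same definition), so that `gap 1 = 0`. For `x = c ^ 3 > 1`, using `arcosh' x = 1 / √(x² - 1)`,
`3 c⁶ √(x² - 1) gap' x = P (c²)` with
`P u = 6u⁶ - 4u⁵ - 6u³ + u² + 3 = (u - 1)² (6u⁴ + 8u³ + 10u² + 6u + 3)`,
which is positive for `u > 1`. Hence `gap` is strictly increasing on `[1, ∞)`.
-/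

open Set

lemma sextic_pos {u : ℝ} (hu : 0 ≤ u) (hu1 : u ≠ 1) :
    0 < 6 * u ^ 6 - 4 * u ^ 5 - 6 * u ^ 3 + u ^ 2 + 3 := by
  have hfactor : 6 * u ^ 6 - 4 * u ^ 5 - 6 * u ^ 3 + u ^ 2 + 3
      = (u - 1) ^ 2 * (6 * u ^ 4 + 8 * u ^ 3 + 10 * u ^ 2 + 6 * u + 3) := by ring
  rw [hfactor]
  exact mul_pos (sq_pos_of_ne_zero (sub_ne_zero.mpr hu1)) (by positivity)

noncomputable def gap (x : ℝ) : ℝ :=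
  (x + 1 / x - x ^ ((1 : ℝ) / 3)) * √(x ^ 2 - 1) - arcosh x

lemma gap_one : gap 1 = 0 := by simp [gap]

lemma continuousOn_gap : ContinuousOn gap (Ici 1) := by
  have hpos : ∀ x ∈ Ici (1 : ℝ), 0 < x := fun x hx => zero_lt_one.trans_le hx
  unfold gap
  refine ContinuousOn.sub (ContinuousOn.mul ?_ (by fun_prop)) continuousOn_arcosh
  exact ((continuousOn_id.add (continuousOn_const.div continuousOn_id
    fun x hx => (hpos x hx).ne')).sub
    (continuousOn_id.rpow_const fun x hx => Or.inl (hpos x hx).ne'))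

lemma hasDerivAt_sqrt_sq_sub_one {x : ℝ} (hx : 1 < x) :
    HasDerivAt (fun y => √(y ^ 2 - 1)) (x / √(x ^ 2 - 1)) x := by
  have hs : 0 < √(x ^ 2 - 1) := sqrt_pos.mpr (by nlinarith)
  convert ((hasDerivAt_pow 2 x).sub_const 1).sqrt (by nlinarith) using 1
  field_simp
  ring

lemma hasDerivAt_gap {x : ℝ} (hx : 1 < x) :
    HasDerivAt gap (((1 - 1 / x ^ 2 - x ^ ((1 : ℝ) / 3) / (3 * x)) * (x ^ 2 - 1)
      + x ^ 2 - x ^ ((1 : ℝ) / 3) * x) / √(x ^ 2 - 1)) x := by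
  have hx0 : 0 < x := by linarith
  have hs : 0 < √(x ^ 2 - 1) := sqrt_pos.mpr (by nlinarith)
  have hcube : HasDerivAt (fun y : ℝ => y ^ ((1 : ℝ) / 3)) (x ^ ((1 : ℝ) / 3) / (3 * x)) x := by
    convert hasDerivAt_rpow_const (p := (1 : ℝ) / 3) (Or.inl hx0.ne') using 1
    rw [rpow_sub_one hx0.ne']
    field_simp
  have hinv : HasDerivAt (fun y : ℝ => 1 / y) (-1 / x ^ 2) x := by
    simpa [one_div, neg_div] using hasDerivAt_inv hx0.ne'
  have hgap : HasDerivAt gap ((1 + -1 / x ^ 2 - x ^ ((1 : ℝ) / 3) / (3 * x)) * √(x ^ 2 - 1)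
      + (x + 1 / x - x ^ ((1 : ℝ) / 3)) * (x / √(x ^ 2 - 1)) - (√(x ^ 2 - 1))⁻¹) x :=
    ((((hasDerivAt_id x).add hinv).sub hcube).mul (hasDerivAt_sqrt_sq_sub_one hx)).sub
      (hasDerivAt_arcosh hx)
  refine hgap.congr_deriv ?_
  have hs2 : √(x ^ 2 - 1) ^ 2 = x ^ 2 - 1 := sq_sqrt (by nlinarith)
  field_simp
  rw [hs2]
  ring

lemma deriv_gap_pos {x : ℝ} (hx : 1 < x) : 0 < deriv gap x := by
  rw [(hasDerivAt_gap hx).deriv]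
  refine div_pos ?_ (sqrt_pos.mpr (by nlinarith))
  have hc : 1 < x ^ ((1 : ℝ) / 3) := one_lt_rpow hx (by norm_num)
  have hx_eq : x = (x ^ ((1 : ℝ) / 3)) ^ 3 := by
    rw [← rpow_natCast, ← rpow_mul (by linarith)]
    norm_num
  set c := x ^ ((1 : ℝ) / 3)
  have hc0 : 0 < c := by linarith
  have key : 3 * c ^ 6 * ((1 - 1 / x ^ 2 - c / (3 * x)) * (x ^ 2 - 1) + x ^ 2 - c * x)
      = 6 * (c ^ 2) ^ 6 - 4 * (c ^ 2) ^ 5 - 6 * (c ^ 2) ^ 3 + (c ^ 2) ^ 2 + 3 := by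
    rw [hx_eq]
    field_simp
    ring
  have hsextic := sextic_pos (sq_nonneg c) (by nlinarith)
  rw [← key] at hsextic
  exact pos_of_mul_pos_right hsextic (by positivity)

lemma strictMonoOn_gap : StrictMonoOn gap (Ici 1) :=
  strictMonoOn_of_deriv_pos (convex_Ici 1) continuousOn_gap fun _ hx =>
    deriv_gap_pos (by rwa [interior_Ici] at hx)

theorem stmt_6 (t : ℝ) (ht : 1 < t) :
    (t + 1 / t - t ^ ((1 : ℝ) / 3)) * Real.sqrt (t ^ 2 - 1) - arccosh t > 0 := by
  have h := strictMonoOn_gap self_mem_Ici ht.le ht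
  rw [gap_one] at h
  exact h
end
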